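/- arXiv:1010.2219 — 5 statements merged into one kernel-verified Lean document; each statement's English description precedes it below -/
import Mathlib

section
/- Let P = (P, ≤_P) be a saturated partial order and let φ : P → 𝒫(Q) be a parsimonious set representation of P. Then for all p ∈ P, φ(p) equals the image under α_φ of the principal ideal π(p) = {p' ∈ P : p' ≤_P p}; moreover, for all p, p' ∈ P, p ≤_P p' if and only if α_φ(p) ∈ φ(p'). -/
namespace SatOrder

variable {α Q : Type}

/-- A set representation of a partial order: an injective map into sets such that
`p < p'` iff `φ p ⊊ φ p'`. -/
def IsSetRep [PartialOrder α] (φ : α → Set Q) : Prop :=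
  Function.Injective φ ∧ ∀ p p' : α, p < p' ↔ φ p ⊂ φ p'

/-- The residual set `φ p − ⋃_{p' < p} φ p'`. -/
def resid [PartialOrder α] (φ : α → Set Q) (p : α) : Set Q :=
  φ p \ ⋃ p' ∈ {x : α | x < p}, φ p'

/-- A parsimonious set representation: every residual is a singleton, and every element of `φ p`
is the residual element of some `p' ≤ p`. -/
def IsParsimonious [PartialOrder α] (φ : α → Set Q) : Prop :=
  IsSetRep φ ∧ (∀ p : α, ∃ q : Q, resid φ p = {q}) ∧
    (∀ p : α, ∀ q ∈ φ p, ∃ p' : α, p' ≤ p ∧ resid φ p' = {q})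

/-- `a` is the map `α_φ`, i.e. `{a p} = φ p − ⋃_{p' < p} φ p'` for all `p`. -/
def IsAlpha [PartialOrder α] (φ : α → Set Q) (a : α → Q) : Prop :=
  ∀ p : α, resid φ p = {a p}

/-- A partial order is saturated if `α_φ` is injective for every parsimonious
set representation `φ`. -/
def IsSaturated (α : Type) [PartialOrder α] : Prop :=
  ∀ (Q : Type) (φ : α → Set Q), IsParsimonious φ →
    ∀ a : α → Q, IsAlpha φ a → Function.Injective a

/-- A bouquet with maximum `m`: a set with at least two elements whose maximum is `m`. -/
def IsBouquet [PartialOrder α] (B : Set α) (m : α) : Prop :=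
  B.Nontrivial ∧ m ∈ B ∧ ∀ b ∈ B, b ≤ m

/-- A fan: a bouquet such that no two distinct elements of `F − {max F}` are comparable. -/
def IsFan [PartialOrder α] (F : Set α) (m : α) : Prop :=
  IsBouquet F m ∧ ∀ b ∈ F \ {m}, ∀ b' ∈ F \ {m}, b ≤ b' → b = b'

/-- Two sets are parallel if no element of one is comparable with any element of the other. -/
def ParallelB [PartialOrder α] (B₀ B₁ : Set α) : Prop :=
  ∀ b₀ ∈ B₀, ∀ b₁ ∈ B₁, ¬ b₀ ≤ b₁ ∧ ¬ b₁ ≤ b₀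

/-- `m` skewly tops `B₀, B₁` (with maxima `m₀, m₁`). -/
def SkewlyTops [PartialOrder α] (m : α) (B₀ B₁ : Set α) (m₀ m₁ : α) : Prop :=
  (m₀ ≤ m ∧ ¬ m₁ ≤ m ∧ ∀ p ∈ B₁ \ {m₁}, p ≤ m) ∨
  (m₁ ≤ m ∧ ¬ m₀ ≤ m ∧ ∀ p ∈ B₀ \ {m₀}, p ≤ m)

/-- `B₀` and `B₁` (with maxima `m₀, m₁`) are skewly topped. -/
def SkewlyTopped [PartialOrder α] (B₀ B₁ : Set α) (m₀ m₁ : α) : Prop :=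
  ∃ m : α, SkewlyTops m B₀ B₁ m₀ m₁

section

variable [PartialOrder α] {φ : α → Set Q} {a : α → Q}

theorem IsSetRep.monotone (hφ : IsSetRep φ) : Monotone φ := by
  intro p p' h
  rcases h.lt_or_eq with h | rfl
  · exact ((hφ.2 p p').mp h).subset
  · exact subset_rfl

theorem IsAlpha.apply_mem (ha : IsAlpha φ a) (p : α) : a p ∈ φ p :=
  (ha p ▸ Set.mem_singleton (a p) : a p ∈ resid φ p).1

theorem IsAlpha.exists_le_apply_eq (hφ : IsParsimonious φ) (ha : IsAlpha φ a) {p : α} {q : Q}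
    (hq : q ∈ φ p) : ∃ p' ≤ p, a p' = q := by
  obtain ⟨p', hle, hres⟩ := hφ.2.2 p q hq
  exact ⟨p', hle, Set.singleton_eq_singleton_iff.mp ((ha p').symm.trans hres)⟩

theorem IsAlpha.eq_image_Iic (hφ : IsParsimonious φ) (ha : IsAlpha φ a) (p : α) :
    φ p = a '' Set.Iic p := by
  ext q
  constructor
  · exact ha.exists_le_apply_eq hφ
  · rintro ⟨p', hle, rfl⟩
    exact hφ.1.monotone hle (ha.apply_mem p')

end

/-- If `P` is saturated and `φ` is a parsimonious set representation, then
`φ p` is the image under `α_φ` of the principal ideal of `p`, and `p ≤ p'` iff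
`α_φ p ∈ φ p'`. -/
theorem saturated_rep_eq_image_principal_ideal {α Q : Type} [PartialOrder α]
    (hsat : IsSaturated α) (φ : α → Set Q) (hφ : IsParsimonious φ)
    (a : α → Q) (ha : IsAlpha φ a) :
    (∀ p : α, φ p = a '' {p' : α | p' ≤ p}) ∧
      (∀ p p' : α, p ≤ p' ↔ a p ∈ φ p') := by
  -- Without injectivity, `a p ∈ φ p'` only gives some `p'' ≤ p'` with `a p'' = a p`.
  have hinj : Function.Injective a := hsat Q φ hφ a ha
  refine ⟨ha.eq_image_Iic hφ, fun p p' => ?_⟩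
  rw [ha.eq_image_Iic hφ p', hinj.mem_set_image, Set.mem_Iic]

end SatOrder
end

section
/- If P = (P, ≤_P) is a partial order in which every element has only finitely many ≤_P-successors, then every two parallel fans in P are skewly topped if and only if every two parallel bouquets in P are skewly topped. -/
namespace SatOrder

variable {α Q : Type}

/-!
Replace each bouquet `B` with top `m` by the fan formed by `m` and the maximal elements of
`B \ {m}`. Since every element has only finitely many successors, each element of `B \ {m}` lies
below one of these maximal elements, so whatever lies above the lower part of the fan lies above
the lower part of the bouquet. Skew topping of the two fans therefore gives skew topping of the
two bouquets; the converse holds because fans are bouquets.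
-/

section

variable {α : Type} [PartialOrder α]

lemma exists_le_maximal_of_finite_Ici (hfin : ∀ p : α, (Set.Ici p).Finite) {s : Set α} {p : α}
    (hp : p ∈ s) : ∃ x, p ≤ x ∧ Maximal (· ∈ s) x := by
  obtain ⟨x, hpx, hx⟩ := ((hfin p).inter_of_left s).exists_le_maximal ⟨le_rfl, hp⟩
  exact ⟨x, hpx, hx.prop.2, fun y hy hxy => hx.2 ⟨hpx.trans hxy, hy⟩ hxy⟩

lemma le_of_forall_maximal_le (hfin : ∀ p : α, (Set.Ici p).Finite) {s : Set α} {t : α}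
    (h : ∀ x, Maximal (· ∈ s) x → x ≤ t) : ∀ p ∈ s, p ≤ t := fun _ hp =>
  let ⟨x, hpx, hx⟩ := exists_le_maximal_of_finite_Ici hfin hp
  hpx.trans (h x hx)

def bouquetFan (B : Set α) (m : α) : Set α :=
  insert m {x | Maximal (· ∈ B \ {m}) x}

lemma bouquetFan_subset {B : Set α} {m : α} (hm : m ∈ B) : bouquetFan B m ⊆ B := by
  rintro x (rfl | hx)
  exacts [hm, hx.prop.1]

lemma mem_bouquetFan_diff {B : Set α} {m x : α} :
    x ∈ bouquetFan B m \ {m} ↔ Maximal (· ∈ B \ {m}) x :=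
  ⟨fun ⟨hx, hxm⟩ => hx.resolve_left hxm, fun hx => ⟨Or.inr hx, hx.prop.2⟩⟩

lemma isFan_bouquetFan (hfin : ∀ p : α, (Set.Ici p).Finite) {B : Set α} {m : α}
    (hB : IsBouquet B m) : IsFan (bouquetFan B m) m := by
  obtain ⟨hnt, hmB, hle⟩ := hB
  obtain ⟨p, hpB, hpm⟩ := hnt.exists_ne m
  obtain ⟨x, -, hx⟩ := exists_le_maximal_of_finite_Ici hfin (s := B \ {m}) ⟨hpB, hpm⟩
  refine ⟨⟨⟨x, Or.inr hx, m, Or.inl rfl, hx.prop.2⟩, Or.inl rfl,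
    fun b hb => hle b (bouquetFan_subset hmB hb)⟩, fun b hb b' hb' hbb' => ?_⟩
  exact (mem_bouquetFan_diff.1 hb).eq_of_le (mem_bouquetFan_diff.1 hb').prop hbb'

lemma le_of_forall_bouquetFan_le (hfin : ∀ p : α, (Set.Ici p).Finite) {B : Set α} {m t : α}
    (h : ∀ p ∈ bouquetFan B m \ {m}, p ≤ t) : ∀ p ∈ B \ {m}, p ≤ t :=
  le_of_forall_maximal_le hfin fun x hx => h x (mem_bouquetFan_diff.2 hx)

lemma SkewlyTops.of_bouquetFan (hfin : ∀ p : α, (Set.Ici p).Finite) {B₀ B₁ : Set α}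
    {m m₀ m₁ : α} (h : SkewlyTops m (bouquetFan B₀ m₀) (bouquetFan B₁ m₁) m₀ m₁) :
    SkewlyTops m B₀ B₁ m₀ m₁ := by
  rcases h with ⟨h₀, h₁, hlow⟩ | ⟨h₁, h₀, hlow⟩
  exacts [Or.inl ⟨h₀, h₁, le_of_forall_bouquetFan_le hfin hlow⟩,
    Or.inr ⟨h₁, h₀, le_of_forall_bouquetFan_le hfin hlow⟩]

lemma ParallelB.mono {B₀ B₁ C₀ C₁ : Set α} (h : ParallelB B₀ B₁)
    (h₀ : C₀ ⊆ B₀) (h₁ : C₁ ⊆ B₁) : ParallelB C₀ C₁ :=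
  fun b₀ hb₀ b₁ hb₁ => h b₀ (h₀ hb₀) b₁ (h₁ hb₁)

end

/-- In a partial order in which every element has only finitely many successors,
every two parallel fans are skewly topped iff every two parallel bouquets are skewly topped. -/
theorem fans_topped_iff_bouquets_topped {α : Type} [PartialOrder α]
    (hfin : ∀ p : α, {p' : α | p ≤ p'}.Finite) :
    (∀ (F₀ F₁ : Set α) (m₀ m₁ : α), IsFan F₀ m₀ → IsFan F₁ m₁ → ParallelB F₀ F₁ →
        SkewlyTopped F₀ F₁ m₀ m₁) ↔
      (∀ (B₀ B₁ : Set α) (m₀ m₁ : α), IsBouquet B₀ m₀ → IsBouquet B₁ m₁ → ParallelB B₀ B₁ →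
        SkewlyTopped B₀ B₁ m₀ m₁) := by
  refine ⟨fun hfans B₀ B₁ m₀ m₁ hB₀ hB₁ hpar => ?_,
    fun hbouquets F₀ F₁ m₀ m₁ hF₀ hF₁ => hbouquets F₀ F₁ m₀ m₁ hF₀.1 hF₁.1⟩
  obtain ⟨m, hm⟩ := hfans _ _ m₀ m₁ (isFan_bouquetFan hfin hB₀) (isFan_bouquetFan hfin hB₁)
    (hpar.mono (bouquetFan_subset hB₀.2.1) (bouquetFan_subset hB₁.2.1))
  exact ⟨m, hm.of_bouquetFan hfin⟩

end SatOrder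
end

section
/- Let P = (P, ≤_P) be a partial order and let B₀ and B₁ be two parallel bouquets in P that are not skewly topped. Then there exists a parsimonious set representation φ of P such that α_φ(max B₀) = α_φ(max B₁); in particular, P is not saturated. -/
/-!
Glue `max B₀` and `max B₁` into one point: with `g = update id m₁ m₀`, represent `p` by
`g '' Iic p`. Since `m₀` and `m₁` are incomparable, `g` is injective on every chain, so the
residual of `p` is `{g p}` and in particular `m₀`, `m₁` share the residual `{m₀}`. The only way
`g '' Iic p ⊆ g '' Iic p'` can fail to force `p ≤ p'` is `p = mᵢ` with `m₁₋ᵢ ≤ p'` but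
`mᵢ ≰ p'`; as all other points below `mᵢ` survive the gluing, `p'` then lies above
`Bᵢ − {mᵢ}`, i.e. `p'` skewly tops the two bouquets.
-/

namespace SatOrder

variable {α Q : Type}

open Function Set

section UpdateId

variable [DecidableEq α] {m₀ m₁ : α}

theorem eq_of_update_id_eq_of_ne {x y : α} (hx₀ : x ≠ m₀) (h : update id m₁ m₀ y = x) :
    y = x := by
  by_cases hy : y = m₁
  · subst hy
    exact absurd (h.symm.trans (update_self ..)) hx₀
  · rwa [update_of_ne hy] at h

theorem eq_or_eq_of_update_id_eq {y : α} (h : update id m₁ m₀ y = m₀) : y = m₀ ∨ y = m₁ := by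
  by_cases hy : y = m₁
  · exact .inr hy
  · rw [update_of_ne hy] at h
    exact .inl h

end UpdateId

variable [PartialOrder α]

theorem isSetRep_of_subset_iff {φ : α → Set Q} (h : ∀ p p', φ p ⊆ φ p' ↔ p ≤ p') :
    IsSetRep φ := by
  refine ⟨fun p p' hpp' => le_antisymm ((h p p').1 hpp'.le) ((h p' p).1 hpp'.ge), fun p p' => ?_⟩
  rw [Set.ssubset_def, lt_iff_le_not_ge, h, h]

theorem resid_image_Iic {f : α → Q} (hf : ∀ x y, x < y → f x ≠ f y) (p : α) :
    resid (fun p => f '' Iic p) p = {f p} := by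
  ext q
  simp only [resid, mem_sdiff, mem_iUnion, mem_ofPred_eq, mem_singleton_iff, exists_prop]
  constructor
  · rintro ⟨⟨x, hx, rfl⟩, hnot⟩
    obtain hlt | rfl := (show x ≤ p from hx).lt_or_eq
    · exact absurd ⟨x, hlt, x, le_rfl, rfl⟩ hnot
    · rfl
  · rintro rfl
    refine ⟨⟨p, le_rfl, rfl⟩, ?_⟩
    rintro ⟨p', hp', y, hy, hfy⟩
    exact hf y p (lt_of_le_of_lt hy hp') hfy

theorem isParsimonious_image_Iic {f : α → Q} (hf : ∀ x y, x < y → f x ≠ f y)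
    (hle : ∀ p p', f '' Iic p ⊆ f '' Iic p' → p ≤ p') :
    IsParsimonious (fun p => f '' Iic p) := by
  refine ⟨isSetRep_of_subset_iff fun p p' => ⟨hle p p', fun h => image_mono (Iic_subset_Iic.2 h)⟩,
    fun p => ⟨f p, resid_image_Iic hf p⟩, ?_⟩
  rintro p q ⟨x, hx, rfl⟩
  exact ⟨x, hx, resid_image_Iic hf x⟩

theorem IsSaturated.eq_of_resid_eq (hsat : IsSaturated α) {φ : α → Set Q}
    (hφ : IsParsimonious φ) {p p' : α} (h : resid φ p = resid φ p') : p = p' := by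
  choose a ha using hφ.2.1
  exact hsat Q φ hφ a ha (singleton_eq_singleton_iff.1 ((ha p).symm.trans (h.trans (ha p'))))

section Gluing

variable [DecidableEq α] {m₀ m₁ : α}

theorem update_id_ne_of_lt (hinc : ¬ m₀ ≤ m₁ ∧ ¬ m₁ ≤ m₀) {x y : α} (hxy : x < y) :
    update id m₁ m₀ x ≠ update id m₁ m₀ y := by
  intro h
  by_cases hx : x = m₁ <;> by_cases hy : y = m₁
  · exact hxy.ne (hx.trans hy.symm)
  · subst hx
    rw [update_self, update_of_ne hy] at h
    exact hinc.2 (h ▸ hxy.le)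
  · subst hy
    rw [update_self, update_of_ne hx] at h
    exact hinc.1 (h ▸ hxy.le)
  · rw [update_of_ne hx, update_of_ne hy] at h
    exact hxy.ne h

theorem le_of_image_update_id_subset {B₀ B₁ : Set α} (hm₀ : m₀ ∈ B₀) (hm₁ : m₁ ∈ B₁)
    (hB₀ : ∀ b ∈ B₀, b ≤ m₀) (hB₁ : ∀ b ∈ B₁, b ≤ m₁) (hpar : ParallelB B₀ B₁)
    (hns : ¬ SkewlyTopped B₀ B₁ m₀ m₁) {p p' : α}
    (hsub : update id m₁ m₀ '' Iic p ⊆ update id m₁ m₀ '' Iic p') : p ≤ p' := by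
  have off : ∀ x ≤ p, x ≠ m₀ → x ≠ m₁ → x ≤ p' := by
    intro x hx hx₀ hx₁
    obtain ⟨y, hy, hgy⟩ := hsub ⟨x, hx, rfl⟩
    rw [update_of_ne hx₁] at hgy
    exact eq_of_update_id_eq_of_ne hx₀ hgy ▸ hy
  have glued : ∀ x ≤ p, update id m₁ m₀ x = m₀ → m₀ ≤ p' ∨ m₁ ≤ p' := by
    intro x hx hgx
    obtain ⟨y, hy, hgy⟩ := hsub ⟨x, hx, rfl⟩
    obtain rfl | rfl := eq_or_eq_of_update_id_eq (hgy.trans hgx)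
    exacts [.inl hy, .inr hy]
  have ne₀ : ∀ b ∈ B₁, b ≠ m₀ := fun b hb h => (hpar m₀ hm₀ b hb).2 h.le
  have ne₁ : ∀ b ∈ B₀, b ≠ m₁ := fun b hb h => (hpar b hb m₁ hm₁).1 h.le
  by_cases hp₁ : p = m₁
  · subst hp₁
    refine (glued p le_rfl (update_self ..)).elim (fun h₀ => ?_) id
    by_contra hn
    exact hns ⟨p', .inl ⟨h₀, hn, fun b hb => off b (hB₁ b hb.1) (ne₀ b hb.1) hb.2⟩⟩
  by_cases hp₀ : p = m₀
  · subst hp₀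
    refine (glued p le_rfl (update_of_ne hp₁ ..)).elim id (fun h₁ => ?_)
    by_contra hn
    exact hns ⟨p', .inr ⟨h₁, hn, fun b hb => off b (hB₀ b hb.1) hb.2 (ne₁ b hb.1)⟩⟩
  exact off p le_rfl hp₀ hp₁

end Gluing

/-- If `B₀` and `B₁` are parallel bouquets that are not skewly topped, then
there is a parsimonious set representation `φ` with `α_φ (max B₀) = α_φ (max B₁)`;
in particular, `P` is not saturated. -/
theorem not_saturated_of_parallel_bouquets_not_topped {α : Type} [PartialOrder α]
    (B₀ B₁ : Set α) (m₀ m₁ : α) (h₀ : IsBouquet B₀ m₀) (h₁ : IsBouquet B₁ m₁)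
    (hpar : ParallelB B₀ B₁) (hns : ¬ SkewlyTopped B₀ B₁ m₀ m₁) :
    (∃ (Q : Type) (φ : α → Set Q), IsParsimonious φ ∧
        ∃ q : Q, resid φ m₀ = {q} ∧ resid φ m₁ = {q}) ∧
      ¬ IsSaturated α := by
  classical
  obtain ⟨-, hm₀, hB₀⟩ := h₀
  obtain ⟨-, hm₁, hB₁⟩ := h₁
  have hinc := hpar m₀ hm₀ m₁ hm₁
  have hg : ∀ x y, x < y → update id m₁ m₀ x ≠ update id m₁ m₀ y :=
    fun _ _ => update_id_ne_of_lt hinc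
  have hφ := isParsimonious_image_Iic hg fun _ _ =>
    le_of_image_update_id_subset hm₀ hm₁ hB₀ hB₁ hpar hns
  have hres₀ : resid (fun p => update id m₁ m₀ '' Iic p) m₀ = {m₀} := by
    rw [resid_image_Iic hg, update_of_ne fun h => hinc.1 h.le, id]
  have hres₁ : resid (fun p => update id m₁ m₀ '' Iic p) m₁ = {m₀} := by
    rw [resid_image_Iic hg, update_self]
  refine ⟨⟨α, _, hφ, m₀, hres₀, hres₁⟩, fun hsat => ?_⟩
  exact hinc.1 (hsat.eq_of_resid_eq hφ (hres₀.trans hres₁.symm)).le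

end SatOrder
end

section
/- Every linear order is saturated; that is, if L = (L, ≤_L) is a linear order, then for every parsimonious set representation φ of L the map α_φ is injective. -/
namespace SatOrder

variable {α Q : Type}

theorem IsAlpha.mem [PartialOrder α] {φ : α → Set Q} {a : α → Q} (ha : IsAlpha φ a) (p : α) :
    a p ∈ φ p :=
  ((ha p).symm ▸ rfl : a p ∈ resid φ p).1

theorem IsAlpha.ne_of_lt [PartialOrder α] {φ : α → Set Q} {a : α → Q} (ha : IsAlpha φ a)
    {p p' : α} (h : p < p') : a p ≠ a p' := by
  intro hap
  have hres : a p' ∈ resid φ p' := (ha p').symm ▸ rfl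
  exact hres.2 (Set.mem_biUnion h (hap ▸ ha.mem p))

/-- Every linear order is saturated: for every parsimonious set representation
`φ` of a linear order, `α_φ` is injective. -/
theorem linearOrder_isSaturated {L : Type} [LinearOrder L] : IsSaturated L := by
  intro Q φ _ a ha p p' hap
  by_contra hne
  rcases lt_or_gt_of_ne hne with h | h
  · exact ha.ne_of_lt h hap
  · exact ha.ne_of_lt h hap.symm

end SatOrder
end

section
/- Every finite interval order is saturated. -/
namespace SatOrder

variable {α Q : Type}

/-- Parsimonious in the finite-cardinality sense: `|φ p| = |⋃_{p' < p} φ p'| + 1`. -/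
def IsParsimoniousFin [PartialOrder α] (φ : α → Set Q) : Prop :=
  ∀ p : α, (φ p).ncard = (⋃ p' ∈ {x : α | x < p}, φ p').ncard + 1

/-- Saturated in the finite-cardinality sense: `|P| = |⋃_{p} φ p|` for every parsimonious
set representation. -/
def IsSaturatedFin (α : Type) [PartialOrder α] : Prop :=
  ∀ (Q : Type) (φ : α → Set Q), IsSetRep φ → IsParsimoniousFin φ →
    Nat.card α = (⋃ p : α, φ p).ncard

/-- An interval order: a partial order admitting an interval representation, i.e. a map
assigning to each `p` a nonempty bounded open interval `(lo p, hi p)` (with `lo p < hi p`)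
of some linear order `L`, such that `p < p'` iff every element of the interval of `p` is
below every element of the interval of `p'`. -/
def IsIntervalOrder (α : Type) [PartialOrder α] : Prop :=
  ∃ (L : Type) (_ : LinearOrder L) (lo hi : α → L),
    (∀ p : α, lo p < hi p ∧ (Set.Ioo (lo p) (hi p)).Nonempty) ∧
    ∀ p p' : α, p < p' ↔
      ∀ ℓ ∈ Set.Ioo (lo p) (hi p), ∀ ℓ' ∈ Set.Ioo (lo p') (hi p'), ℓ < ℓ'

/-!
In a parsimonious set representation the residual `φ p \ ⋃_{p' < p} φ p'` is a singleton
`{a p}`, and by well-founded induction every element of `φ p` is `a p'` for some `p' ≤ p`; hence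
`⋃ φ = range a`, and it remains to show that `a` is injective. If `a p = a q` with `p ≠ q`, then
`φ p` and `φ q` are incomparable, and elements of `φ p \ φ q` and `φ q \ φ p` are `a p₁`, `a q₁`
with `p₁ < p`, `q₁ < q`, `p₁ ≮ q`, `q₁ ≮ p`: a `2 + 2`, which an interval order cannot contain.
-/

/-- No induced copy of `2 + 2`, i.e. of two disjoint two-element chains with no further relations. -/
def TwoPlusTwoFree (α : Type) [Preorder α] : Prop :=
  ∀ ⦃p₁ p q₁ q : α⦄, p₁ < p → q₁ < q → ¬ p₁ < q → q₁ < p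

theorem IsIntervalOrder.twoPlusTwoFree [PartialOrder α] (h : IsIntervalOrder α) :
    TwoPlusTwoFree α := by
  obtain ⟨L, _, lo, hi, -, hlt⟩ := h
  intro p₁ p q₁ q hp hq hp₁q
  simp only [hlt, not_forall, not_lt] at hp hq hp₁q ⊢
  obtain ⟨m, hm, m', hm', hm'm⟩ := hp₁q
  intro ℓ hℓ ℓ' hℓ'
  exact (hq ℓ hℓ m' hm').trans_le (hm'm.trans (hp m hm ℓ' hℓ').le)

section SetRep

variable [PartialOrder α] {φ : α → Set Q} {a : α → Q}

theorem IsSetRep.subset_of_lt (hφ : IsSetRep φ) {p p' : α} (h : p < p') : φ p ⊆ φ p' :=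
  ((hφ.2 p p').1 h).1

theorem IsSetRep.biUnion_lt_subset (hφ : IsSetRep φ) (p : α) :
    ⋃ p' ∈ {x : α | x < p}, φ p' ⊆ φ p :=
  Set.iUnion₂_subset fun _ h => hφ.subset_of_lt h

theorem IsParsimoniousFin.finite (hpars : IsParsimoniousFin φ) (p : α) : (φ p).Finite :=
  Set.finite_of_ncard_ne_zero (by rw [hpars p]; omega)

theorem exists_isAlpha (hφ : IsSetRep φ) (hpars : IsParsimoniousFin φ) : ∃ a : α → Q, IsAlpha φ a := by
  suffices ∀ p, ∃ q, resid φ p = {q} by choose a ha using this; exact ⟨a, ha⟩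
  intro p
  rw [← Set.ncard_eq_one, resid,
    Set.ncard_sdiff (hφ.biUnion_lt_subset p) ((hpars.finite p).subset (hφ.biUnion_lt_subset p)),
    hpars p, Nat.add_sub_cancel_left]

namespace IsAlpha

theorem mem_s17 (ha : IsAlpha φ a) (p : α) : a p ∈ φ p :=
  ((Set.ext_iff.1 (ha p) (a p)).2 rfl).1

theorem notMem_of_lt (ha : IsAlpha φ a) {p p' : α} (h : p' < p) : a p ∉ φ p' := fun hmem =>
  ((Set.ext_iff.1 (ha p) (a p)).2 rfl).2 (Set.mem_biUnion h hmem)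

theorem exists_le_eq [WellFoundedLT α] (ha : IsAlpha φ a) (p : α) :
    ∀ q ∈ φ p, ∃ p' ≤ p, a p' = q := by
  induction p using WellFoundedLT.induction with
  | _ p ih =>
    intro q hq
    by_cases hbelow : q ∈ ⋃ p' ∈ {x : α | x < p}, φ p'
    · obtain ⟨p', hp', hq'⟩ := Set.mem_iUnion₂.1 hbelow
      obtain ⟨p'', hp'', rfl⟩ := ih p' hp' q hq'
      exact ⟨p'', hp''.trans hp'.le, rfl⟩
    · have hres : q ∈ resid φ p := ⟨hq, hbelow⟩
      rw [ha p] at hres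
      exact ⟨p, le_rfl, hres.symm⟩

theorem iUnion_eq_range [WellFoundedLT α] (ha : IsAlpha φ a) : ⋃ p, φ p = Set.range a := by
  ext q
  simp only [Set.mem_iUnion, Set.mem_range]
  constructor
  · rintro ⟨p, hq⟩
    obtain ⟨p', -, hp'⟩ := ha.exists_le_eq p q hq
    exact ⟨p', hp'⟩
  · rintro ⟨p, rfl⟩
    exact ⟨p, ha.mem_s17 p⟩

theorem exists_lt_not_lt_of_eq [WellFoundedLT α] (hφ : IsSetRep φ) (ha : IsAlpha φ a) {p q : α}
    (hne : p ≠ q) (hpq : a p = a q) : ∃ p₁ < p, ¬ p₁ < q := by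
  have hnsub : ¬ φ p ⊆ φ q := fun hsub =>
    have hlt : p < q := (hφ.2 p q).2 (hsub.ssubset_of_ne (hφ.1.ne hne))
    ha.notMem_of_lt hlt (hpq ▸ ha.mem_s17 p)
  obtain ⟨y, hyp, hyq⟩ := Set.not_subset.1 hnsub
  obtain ⟨p₁, hp₁, rfl⟩ := ha.exists_le_eq p y hyp
  refine ⟨p₁, hp₁.lt_of_ne ?_, fun hlt => hyq (hφ.subset_of_lt hlt (ha.mem_s17 p₁))⟩
  rintro rfl
  exact hyq (hpq ▸ ha.mem_s17 q)

theorem injective [WellFoundedLT α] (hφ : IsSetRep φ) (ha : IsAlpha φ a)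
    (h22 : TwoPlusTwoFree α) : Function.Injective a := by
  intro p q hpq
  by_contra hne
  obtain ⟨p₁, hp₁, hp₁q⟩ := ha.exists_lt_not_lt_of_eq hφ hne hpq
  obtain ⟨q₁, hq₁, hq₁p⟩ := ha.exists_lt_not_lt_of_eq hφ (Ne.symm hne) hpq.symm
  exact hq₁p (h22 hp₁ hq₁ hp₁q)

end IsAlpha

end SetRep

/-- Every finite interval order is saturated. -/
theorem finite_intervalOrder_isSaturated {α : Type} [PartialOrder α] [Finite α]
    (h : IsIntervalOrder α) : IsSaturatedFin α := by
  intro Q φ hφ hpars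
  obtain ⟨a, ha⟩ := exists_isAlpha hφ hpars
  rw [ha.iUnion_eq_range, Set.ncard_range_of_injective (ha.injective hφ h.twoPlusTwoFree)]

end SatOrder
end
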